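/- G(Y) ≤ 0 for every Y ∈ (0,1], and G(Y) = 0 if and only if Y = 1. -/
import Mathlib

set_option maxHeartbeats 1000000


/-- `G(Y) = Y + 3/2 - (5/2)·(3/5 + (2/5)·Y^{5/3})^{3/5} + (1/10)·(Y - 1)²`. -/
noncomputable def Gfun (Y : ℝ) : ℝ :=
  Y + 3 / 2 - (5 / 2) * (3 / 5 + (2 / 5) * Y ^ ((5 : ℝ) / 3)) ^ ((3 : ℝ) / 5) +
    (1 / 10) * (Y - 1) ^ 2

/-- The cofactor `Q(t)` with `2500000(3+2t⁵)³ − 32(t³+4)¹⁰ = (t−1)²·Q(t)`. -/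
noncomputable def Qpoly (t : ℝ) : ℝ :=
  (33945568:ℝ) + (67891136:ℝ)*t + (101836704:ℝ)*t^2 + (51896192:ℝ)*t^3 +
  (1955680:ℝ)*t^4 + (87015168:ℝ)*t^5 + (77702816:ℝ)*t^6 + (68390464:ℝ)*t^7 +
  (59078112:ℝ)*t^8 - (13148800:ℝ)*t^9 + (4624288:ℝ)*t^10 + (22397376:ℝ)*t^11 +
  (12645344:ℝ)*t^12 + (2893312:ℝ)*t^13 - (6858720:ℝ)*t^14 - (4868288:ℝ)*t^15 -
  (2877856:ℝ)*t^16 - (887424:ℝ)*t^17 - (617312:ℝ)*t^18 - (347200:ℝ)*t^19 -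
  (77088:ℝ)*t^20 - (52736:ℝ)*t^21 - (28384:ℝ)*t^22 - (4032:ℝ)*t^23 -
  (2720:ℝ)*t^24 - (1408:ℝ)*t^25 - (96:ℝ)*t^26 - (64:ℝ)*t^27 - (32:ℝ)*t^28

lemma Qpoly_pos {t : ℝ} (ht0' : 0 ≤ t) (ht1 : t ≤ 1) : 0 < Qpoly t := by
  have hb : ∀ n : ℕ, t ^ n ≤ 1 := fun n => pow_le_one₀ ht0' ht1
  have hn : ∀ n : ℕ, 0 ≤ t ^ n := fun n => pow_nonneg ht0' n
  unfold Qpoly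
  nlinarith [hb 9, hb 14, hb 15, hb 16, hb 17, hb 18, hb 19, hb 20, hb 21,
    hb 22, hb 23, hb 24, hb 25, hb 26, hb 27, hb 28, hn 1, hn 2, hn 3, hn 4,
    hn 5, hn 6, hn 7, hn 8, hn 10, hn 11, hn 12, hn 13]

lemma poly_key (t : ℝ) :
    2500000*(3+2*t^5)^3 - 32*(t^3+4)^10 = (t-1)^2 * Qpoly t := by
  unfold Qpoly; ring

/-- `G(Y) ≤ 0` for every `Y ∈ (0,1]`, and `G(Y) = 0` if and only if `Y = 1`. -/
theorem stmt15 :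
    ∀ Y : ℝ, 0 < Y → Y ≤ 1 → Gfun Y ≤ 0 ∧ (Gfun Y = 0 ↔ Y = 1) := by
  intro Y hY0 hY1
  set t := Y ^ ((1:ℝ)/3) with ht
  have ht0 : 0 < t := Real.rpow_pos_of_pos hY0 _
  have ht1 : t ≤ 1 := Real.rpow_le_one hY0.le hY1 (by norm_num)
  have hY : Y = t ^ 3 := by
    rw [ht, ← Real.rpow_natCast (Y ^ ((1:ℝ)/3)) 3, ← Real.rpow_mul hY0.le]
    norm_num
  have hY53 : Y ^ ((5:ℝ)/3) = t ^ 5 := by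
    rw [ht, ← Real.rpow_natCast (Y ^ ((1:ℝ)/3)) 5, ← Real.rpow_mul hY0.le]
    norm_num
  set u : ℝ := 3/5 + (2/5) * t ^ 5 with hu
  have hu0 : 0 < u := by positivity
  set A : ℝ := u ^ ((3:ℝ)/5) with hA
  have hA0 : 0 < A := Real.rpow_pos_of_pos hu0 _
  have hA5 : A ^ 5 = u ^ 3 := by
    rw [hA, ← Real.rpow_natCast (u ^ ((3:ℝ)/5)) 5, ← Real.rpow_mul hu0.le]
    rw [show ((3:ℝ)/5) * (5:ℕ) = ((3:ℕ):ℝ) by push_cast; ring, Real.rpow_natCast]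
  have hG : Gfun Y = (t^3 + 3/2 + (1/10)*(t^3-1)^2) - (5/2) * A := by
    rw [Gfun, hY53, ← hu, ← hA, hY]; ring
  set q : ℝ := t^3 + 3/2 + (1/10)*(t^3-1)^2 with hq
  have hq0 : 0 < q := by positivity
  -- main inequality at the 5th-power level
  have hident : ((5/2) * A) ^ 5 - q ^ 5 =
      (2500000*(3+2*t^5)^3 - 32*(t^3+4)^10) / 3200000 := by
    rw [mul_pow, hA5, hu, hq]; ring
  have hQpos := Qpoly_pos ht0.le ht1
  -- weak inequality
  have hnn : 0 ≤ (t-1)^2 * Qpoly t / 3200000 :=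
    div_nonneg (mul_nonneg (sq_nonneg _) hQpos.le) (by norm_num)
  have hpow : q ^ 5 ≤ ((5/2) * A) ^ 5 := by
    have h := poly_key t
    rw [h] at hident
    linarith
  have hle : q ≤ (5/2) * A :=
    le_of_pow_le_pow_left₀ (by norm_num) (by positivity) hpow
  constructor
  · rw [hG]; linarith
  constructor
  · -- Gfun Y = 0 → Y = 1
    intro h0
    by_contra hne
    have hYlt : Y < 1 := lt_of_le_of_ne hY1 hne
    have htlt : t < 1 := Real.rpow_lt_one hY0.le hYlt (by norm_num)
    have hsq : 0 < (t-1)^2 := by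
      rw [sq]; exact mul_pos_of_neg_of_neg (by linarith) (by linarith)
    have hpow' : q ^ 5 < ((5/2) * A) ^ 5 := by
      have h := poly_key t
      have hp : 0 < (t-1)^2 * Qpoly t / 3200000 :=
        div_pos (mul_pos hsq hQpos) (by norm_num)
      linarith
    have hlt : q < (5/2) * A :=
      lt_of_pow_lt_pow_left₀ 5 (by positivity) hpow'
    rw [hG] at h0
    linarith
  · -- Y = 1 → Gfun Y = 0
    intro h1
    have ht1' : t = 1 := by
      rw [ht, h1, Real.one_rpow]
    rw [hG, hq, hA, hu, ht1']
    norm_num [Real.one_rpow]
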